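/- Let $n\ge 1$ and define the real polynomial (the continuous dual Hahn polynomial with parameters $a=b=c=1/2$, as a function of real $x$) by $S_n(x^2;1/2,1/2,1/2) = (n!)^2\sum_{\nu=0}^{n}\frac{(-1)^\nu\, n!}{(n-\nu)!\,\nu!\,(\nu!)^2}\prod_{j=0}^{\nu-1}\Big(\big(j+\tfrac12\big)^2+x^2\Big)$. Let $x_{n,1}$ be its smallest positive zero, and let $d_n$ be the smallest constant such that $\sum_{k=1}^{n}\big(\frac{1}{k}\sum_{j=1}^{k}a_j\big)^2 \le d_n\sum_{k=1}^{n}a_k^2$ for all real $a_1,\dots,a_n$. Then $d_n = 4\Big(1-\frac{4x_{n,1}^2}{1+4x_{n,1}^2}\Big) = \frac{4}{1+4x_{n,1}^2}$. -/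

import Mathlib

open Real Finset

/-- The continuous dual Hahn polynomial `S_n(x^2; 1/2, 1/2, 1/2)`, viewed as a
real function of `x`. -/
noncomputable def contDualHahnHalf (n : ℕ) (x : ℝ) : ℝ :=
  ((n.factorial : ℝ)) ^ 2 *
    ∑ ν ∈ Finset.range (n + 1),
      ((-1 : ℝ) ^ ν * (n.factorial : ℝ) /
          (((n - ν).factorial : ℝ) * (ν.factorial : ℝ) * ((ν.factorial : ℝ)) ^ 2)) *
        ∏ j ∈ Finset.range ν, (((j : ℝ) + 1 / 2) ^ 2 + x ^ 2)

/-!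
Substituting for `a` the differences `a_k = k b_k - (k-1) b_{k-1}` of its Cesàro means `b`, the
Hardy constant becomes `1/λ`, where `λ` is the least eigenvalue of the quadratic form
`∑ (k b_k - (k-1) b_{k-1})²` relative to `∑ b_k²` on `{1,…,n}`, a tridiagonal matrix.

Write `μ = 1/4 + x²` and `s_N(μ) = S_N(x²; 1/2, 1/2, 1/2) / (N!)²`. The contiguous relation
`μ ∑_{i ≤ N} s_i = (N+1)² (s_N - s_{N+1})` says that the Cesàro means of `k ↦ s_{k-1}(μ)`
satisfy every eigenvector equation except the last one, which holds exactly when `s_n(μ) = 0`.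
The first `n - 1` equations determine an eigenvector from its first entry, so the eigenvalues
are the roots of `s_n`. A minimiser of the Rayleigh quotient (it exists by compactness) is an
eigenvector, so `λ` is a root; the Picone identity with the positive solution at `μ = 1/4`
gives `λ > 1/4`. Hence `λ = 1/4 + x_{n,1}²`.
-/

-- `dualHahn n (1/4 + x²) = ₃F₂(-n, 1/2 + ix, 1/2 - ix; 1, 1; 1) = S_n(x²; 1/2, 1/2, 1/2) / (n!)²`,
-- written in `μ = 1/4 + x²` through `(1/2 + ix)_ν (1/2 - ix)_ν = ∏_{j<ν} (μ + j(j+1))`.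
noncomputable def dualHahnTerm (ν : ℕ) (μ : ℝ) : ℝ :=
  (-1) ^ ν / (ν.factorial : ℝ) ^ 2 * ∏ j ∈ range ν, (μ + j * (j + 1))

noncomputable def dualHahn (n : ℕ) (μ : ℝ) : ℝ :=
  ∑ ν ∈ range (n + 1), (n.choose ν : ℝ) * dualHahnTerm ν μ

theorem contDualHahnHalf_eq (n : ℕ) (x : ℝ) :
    contDualHahnHalf n x = (n.factorial : ℝ) ^ 2 * dualHahn n (1 / 4 + x ^ 2) := by
  unfold contDualHahnHalf dualHahn dualHahnTerm
  congr 1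
  refine sum_congr rfl fun ν hν => ?_
  rw [Nat.cast_choose ℝ (mem_range_succ_iff.1 hν),
    prod_congr rfl fun (j : ℕ) _ =>
      show ((j : ℝ) + 1 / 2) ^ 2 + x ^ 2 = 1 / 4 + x ^ 2 + j * (j + 1) by ring]
  field_simp

theorem dualHahn_zero (μ : ℝ) : dualHahn 0 μ = 1 := by
  simp [dualHahn, dualHahnTerm]

theorem dualHahn_eq_sum_range {n M : ℕ} (h : n < M) (μ : ℝ) :
    dualHahn n μ = ∑ ν ∈ range M, (n.choose ν : ℝ) * dualHahnTerm ν μ := by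
  refine sum_subset (range_subset_range.2 h) fun ν _ hν => ?_
  rw [Nat.choose_eq_zero_of_lt (by simpa using hν), Nat.cast_zero, zero_mul]

theorem mul_dualHahnTerm (ν : ℕ) (μ : ℝ) :
    μ * dualHahnTerm ν μ
      = -((ν + 1) ^ 2 * dualHahnTerm (ν + 1) μ + ν * (ν + 1) * dualHahnTerm ν μ) := by
  simp only [dualHahnTerm, prod_range_succ, Nat.factorial_succ, pow_succ, Nat.cast_mul]
  field_simp
  push_cast
  ring

theorem sum_range_dualHahn (N : ℕ) (μ : ℝ) :
    ∑ i ∈ range (N + 1), dualHahn i μ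
      = ∑ ν ∈ range (N + 2), ((N + 1).choose (ν + 1) : ℝ) * dualHahnTerm ν μ := by
  induction N with
  | zero => simp [dualHahn, sum_range_succ]
  | succ N ih =>
    rw [sum_range_succ, ih, dualHahn_eq_sum_range (by omega : N + 1 < N + 2), ← sum_add_distrib,
      sum_range_succ _ (N + 2), Nat.choose_eq_zero_of_lt (by omega : N + 2 < N + 3)]
    simp only [Nat.choose_succ_succ' (N + 1), Nat.cast_add, Nat.cast_zero, zero_mul, add_zero]
    exact sum_congr rfl fun ν _ => by ring

theorem add_one_sq_mul_choose_sub_choose (N ν : ℕ) :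
    ((N : ℝ) + 1) ^ 2 * ((N + 1).choose ν - N.choose ν)
      = ν ^ 2 * (N + 1).choose ν + ν * (ν + 1) * (N + 1).choose (ν + 1) := by
  rcases ν with _ | k
  · simp
  have e1 := Nat.add_one_mul_choose_eq N k
  have e2 := Nat.add_one_mul_choose_eq N (k + 1)
  have e3 := Nat.choose_succ_succ' N k
  rify at e1 e2 e3
  push_cast
  linear_combination (↑N + 1) * (↑N + ↑k + 2) * e3 + (↑N + ↑k + 2) * e1 + (↑k + 1) * e2

theorem mul_sum_range_dualHahn (μ : ℝ) (N : ℕ) :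
    μ * ∑ i ∈ range (N + 1), dualHahn i μ
      = ((N : ℝ) + 1) ^ 2 * (dualHahn N μ - dualHahn (N + 1) μ) := by
  set t := fun ν => dualHahnTerm ν μ
  have hshift :
      ∑ ν ∈ range (N + 2), ((N + 1).choose (ν + 1) : ℝ) * ((ν + 1 : ℕ) ^ 2 * t (ν + 1))
        = ∑ ν ∈ range (N + 3), ((N + 1).choose ν : ℝ) * (ν ^ 2 * t ν) := by
    rw [sum_range_succ' _ (N + 2)]; simp
  have hext : ∑ ν ∈ range (N + 2), ((N + 1).choose (ν + 1) : ℝ) * (ν * (ν + 1) * t ν)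
      = ∑ ν ∈ range (N + 3), ((N + 1).choose (ν + 1) : ℝ) * (ν * (ν + 1) * t ν) := by
    rw [sum_range_succ _ (N + 2), Nat.choose_eq_zero_of_lt (by omega : N + 1 < N + 2 + 1)]; simp
  calc μ * ∑ i ∈ range (N + 1), dualHahn i μ
      = -(∑ ν ∈ range (N + 2), ((N + 1).choose (ν + 1) : ℝ) * ((ν + 1 : ℕ) ^ 2 * t (ν + 1))
          + ∑ ν ∈ range (N + 2), ((N + 1).choose (ν + 1) : ℝ) * (ν * (ν + 1) * t ν)) := by
        rw [sum_range_dualHahn, mul_sum, ← sum_add_distrib, ← sum_neg_distrib]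
        refine sum_congr rfl fun ν _ => ?_
        rw [mul_left_comm, mul_dualHahnTerm]; push_cast; ring
    _ = ∑ ν ∈ range (N + 3),
          ((N : ℝ) + 1) ^ 2 * ((N.choose ν : ℝ) - (N + 1).choose ν) * t ν := by
        rw [hshift, hext, ← sum_add_distrib, ← sum_neg_distrib]
        refine sum_congr rfl fun ν _ => ?_
        linear_combination t ν * add_one_sq_mul_choose_sub_choose N ν
    _ = ((N : ℝ) + 1) ^ 2 * (dualHahn N μ - dualHahn (N + 1) μ) := by
        rw [dualHahn_eq_sum_range (by omega : N < N + 3),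
          dualHahn_eq_sum_range (by omega : N + 1 < N + 3), ← sum_sub_distrib, mul_sum]
        exact sum_congr rfl fun ν _ => by ring

def hardyDiff (b : ℕ → ℝ) (k : ℕ) : ℝ := k * b k - ((k : ℝ) - 1) * b (k - 1)

def hardyForm (n : ℕ) (b : ℕ → ℝ) : ℝ := ∑ k ∈ Icc 1 n, hardyDiff b k ^ 2

def sqSum (n : ℕ) (b : ℕ → ℝ) : ℝ := ∑ k ∈ Icc 1 n, b k ^ 2

theorem hardyDiff_succ (b : ℕ → ℝ) (k : ℕ) :
    hardyDiff b (k + 1) = (k + 1) * b (k + 1) - k * b k := by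
  simp [hardyDiff]

theorem sum_Icc_hardyDiff (b : ℕ → ℝ) (k : ℕ) : ∑ j ∈ Icc 1 k, hardyDiff b j = k * b k := by
  induction k with
  | zero => simp
  | succ k ih => rw [sum_Icc_succ_top (by omega), ih, hardyDiff_succ]; push_cast; ring

theorem cesaro_hardyDiff (b : ℕ → ℝ) {k : ℕ} (hk : 1 ≤ k) :
    1 / (k : ℝ) * ∑ j ∈ Icc 1 k, hardyDiff b j = b k := by
  rw [sum_Icc_hardyDiff]; field_simp

theorem hardyDiff_cesaro (a : ℕ → ℝ) {k : ℕ} (hk : 1 ≤ k) :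
    hardyDiff (fun k => 1 / (k : ℝ) * ∑ j ∈ Icc 1 k, a j) k = a k := by
  have h : ∀ k : ℕ, (k : ℝ) * (1 / k * ∑ j ∈ Icc 1 k, a j) = ∑ j ∈ Icc 1 k, a j := by
    intro k
    rcases k with _ | k
    · simp
    · field_simp
  obtain ⟨k, rfl⟩ := Nat.exists_eq_add_of_le' hk
  rw [hardyDiff_succ, h, ← Nat.cast_add_one, h, sum_Icc_succ_top (by omega)]
  ring

theorem hardyForm_nonneg (n : ℕ) (b : ℕ → ℝ) : 0 ≤ hardyForm n b := by
  unfold hardyForm; positivity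

theorem sqSum_nonneg (n : ℕ) (b : ℕ → ℝ) : 0 ≤ sqSum n b := by
  unfold sqSum; positivity

theorem hardyForm_congr {n : ℕ} {b c : ℕ → ℝ} (h : ∀ k ∈ Icc 1 n, b k = c k) :
    hardyForm n b = hardyForm n c := by
  refine sum_congr rfl fun k hk => ?_
  obtain ⟨hk1, hkn⟩ := mem_Icc.1 hk
  have hprev : ((k : ℝ) - 1) * b (k - 1) = ((k : ℝ) - 1) * c (k - 1) := by
    rcases hk1.eq_or_lt with rfl | hk1
    · simp
    · rw [h (k - 1) (mem_Icc.2 ⟨by omega, by omega⟩)]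
  rw [hardyDiff, hardyDiff, h k hk, hprev]

theorem hardyForm_smul (n : ℕ) (t : ℝ) (b : ℕ → ℝ) :
    hardyForm n (t • b) = t ^ 2 * hardyForm n b := by
  simp only [hardyForm, hardyDiff, mul_sum, Pi.smul_apply, smul_eq_mul]
  exact sum_congr rfl fun k _ => by ring

theorem sqSum_smul (n : ℕ) (t : ℝ) (b : ℕ → ℝ) : sqSum n (t • b) = t ^ 2 * sqSum n b := by
  simp only [sqSum, mul_sum, Pi.smul_apply, smul_eq_mul]
  exact sum_congr rfl fun k _ => by ring

theorem hardyForm_add_smul (n : ℕ) (b c : ℕ → ℝ) (t : ℝ) :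
    hardyForm n (b + t • c) = hardyForm n b
      + 2 * t * ∑ k ∈ Icc 1 n, hardyDiff b k * hardyDiff c k + t ^ 2 * hardyForm n c := by
  simp only [hardyForm, mul_sum, ← sum_add_distrib]
  refine sum_congr rfl fun k _ => ?_
  simp only [hardyDiff, Pi.add_apply, Pi.smul_apply, smul_eq_mul]
  ring

theorem sqSum_add_smul (n : ℕ) (b c : ℕ → ℝ) (t : ℝ) :
    sqSum n (b + t • c)
      = sqSum n b + 2 * t * ∑ k ∈ Icc 1 n, b k * c k + t ^ 2 * sqSum n c := by
  simp only [sqSum, mul_sum, ← sum_add_distrib]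
  refine sum_congr rfl fun k _ => ?_
  simp only [Pi.add_apply, Pi.smul_apply, smul_eq_mul]
  ring

theorem sum_Icc_eq_sum_Ico_add {n : ℕ} (hn : 1 ≤ n) (f : ℕ → ℝ) :
    ∑ k ∈ Icc 1 n, f k = ∑ k ∈ Ico 1 n, f k + f n := by
  rw [Icc_eq_cons_Ico hn, sum_cons, add_comm]

theorem sum_hardyDiff_mul_hardyDiff {n : ℕ} (hn : 1 ≤ n) (b c : ℕ → ℝ) :
    ∑ k ∈ Icc 1 n, hardyDiff b k * hardyDiff c k
      = ∑ k ∈ Ico 1 n, k * c k * (hardyDiff b k - hardyDiff b (k + 1))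
        + n * c n * hardyDiff b n := by
  induction n, hn using Nat.le_induction with
  | base => simp [hardyDiff]; ring
  | succ n hn ih =>
    rw [sum_Icc_succ_top (by omega), ih, sum_Ico_succ_top hn, hardyDiff_succ c]
    push_cast
    ring

theorem hardyForm_eq_picone {n : ℕ} (hn : 1 ≤ n) {σ : ℕ → ℝ} (hσ : ∀ k ∈ Icc 1 n, σ k ≠ 0)
    (b : ℕ → ℝ) :
    hardyForm n b = ∑ k ∈ Ico 1 n, (k * (hardyDiff σ k - hardyDiff σ (k + 1)) / σ k * b k ^ 2
        + k * (k + 1) / (σ k * σ (k + 1)) * (σ (k + 1) * b k - σ k * b (k + 1)) ^ 2)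
      + n * hardyDiff σ n / σ n * b n ^ 2 := by
  induction n, hn using Nat.le_induction with
  | base =>
    have h1 := hσ 1 (by simp)
    simp [hardyForm, hardyDiff]
    field_simp
  | succ n hn ih =>
    have h1 := hσ n (mem_Icc.2 ⟨hn, by omega⟩)
    have h2 := hσ (n + 1) (mem_Icc.2 ⟨by omega, le_rfl⟩)
    rw [hardyForm, sum_Icc_succ_top (by omega), ← hardyForm,
      ih fun k hk => hσ k (mem_Icc.2 ⟨(mem_Icc.1 hk).1, by linarith [(mem_Icc.1 hk).2]⟩),
      sum_Ico_succ_top hn, hardyDiff_succ b, hardyDiff_succ σ]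
    push_cast
    field_simp
    ring

theorem mul_sqSum_le_hardyForm_of_supersolution {n : ℕ} (hn : 1 ≤ n) {μ : ℝ} {σ : ℕ → ℝ}
    (hσ : ∀ k ∈ Icc 1 n, 0 < σ k)
    (hrow : ∀ k ∈ Ico 1 n, μ * σ k ≤ k * (hardyDiff σ k - hardyDiff σ (k + 1)))
    (hlast : μ * σ n ≤ n * hardyDiff σ n) (b : ℕ → ℝ) :
    μ * sqSum n b ≤ hardyForm n b := by
  rw [hardyForm_eq_picone hn (fun k hk => (hσ k hk).ne') b, sqSum, sum_Icc_eq_sum_Ico_add hn,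
    mul_add, mul_sum]
  have hn' := hσ n (mem_Icc.2 ⟨hn, le_rfl⟩)
  gcongr with k hk
  · have hk' := hσ k (mem_Icc.2 ⟨(mem_Ico.1 hk).1, (mem_Ico.1 hk).2.le⟩)
    have hk'' := hσ (k + 1) (mem_Icc.2 ⟨by omega, (mem_Ico.1 hk).2⟩)
    have hcoef : μ ≤ k * (hardyDiff σ k - hardyDiff σ (k + 1)) / σ k :=
      (le_div_iff₀ hk').2 (hrow k hk)
    have hsq : 0 ≤ k * (k + 1) / (σ k * σ (k + 1)) * (σ (k + 1) * b k - σ k * b (k + 1)) ^ 2 := by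
      positivity
    nlinarith [sq_nonneg (b k)]
  · exact (le_div_iff₀ hn').2 hlast

-- The rows of the tridiagonal matrix of `hardyForm n` on `{1, …, n}`: diagonal `2k²` (but `n²` in
-- the last row), off-diagonal `-k(k+1)`.
def IsHardyEigenvector (n : ℕ) (μ : ℝ) (b : ℕ → ℝ) : Prop :=
  (∀ k ∈ Ico 1 n, k * (hardyDiff b k - hardyDiff b (k + 1)) = μ * b k) ∧
    n * hardyDiff b n = μ * b n

theorem IsHardyEigenvector.hardyForm_eq {n : ℕ} (hn : 1 ≤ n) {μ : ℝ} {b : ℕ → ℝ}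
    (hb : IsHardyEigenvector n μ b) : hardyForm n b = μ * sqSum n b := by
  rw [hardyForm, sum_congr rfl fun k _ => sq (hardyDiff b k), sum_hardyDiff_mul_hardyDiff hn,
    sqSum, sum_Icc_eq_sum_Ico_add hn, mul_add, mul_sum]
  congr 1
  · exact sum_congr rfl fun k hk => by rw [mul_right_comm, hb.1 k hk]; ring
  · rw [mul_right_comm, hb.2]; ring

theorem sum_hardyDiff_mul_eq_of_isMin {n : ℕ} {μ : ℝ} {b : ℕ → ℝ}
    (hmin : ∀ c, μ * sqSum n c ≤ hardyForm n c) (hb : hardyForm n b = μ * sqSum n b)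
    (c : ℕ → ℝ) :
    ∑ k ∈ Icc 1 n, hardyDiff b k * hardyDiff c k = μ * ∑ k ∈ Icc 1 n, b k * c k := by
  set β := ∑ k ∈ Icc 1 n, hardyDiff b k * hardyDiff c k - μ * ∑ k ∈ Icc 1 n, b k * c k
  have h : ∀ t : ℝ, 0 ≤ (hardyForm n c - μ * sqSum n c) * (t * t) + 2 * β * t + 0 := by
    intro t
    have := hmin (b + t • c)
    rw [hardyForm_add_smul, sqSum_add_smul] at this
    linear_combination this + hb
  have := discrim_le_zero h
  rw [discrim] at this
  nlinarith [sq_nonneg β]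

theorem isHardyEigenvector_of_isMin {n : ℕ} (hn : 1 ≤ n) {μ : ℝ} {b : ℕ → ℝ}
    (hmin : ∀ c, μ * sqSum n c ≤ hardyForm n c) (hb : hardyForm n b = μ * sqSum n b) :
    IsHardyEigenvector n μ b := by
  have key j := sum_hardyDiff_mul_eq_of_isMin hmin hb (Pi.single j 1)
  simp only [sum_hardyDiff_mul_hardyDiff hn, Pi.single_apply, mul_ite, ite_mul, mul_one, mul_zero,
    zero_mul, sum_ite_eq', mem_Icc, mem_Ico] at key
  refine ⟨fun j hj => ?_, ?_⟩
  · obtain ⟨hj1, hjn⟩ := mem_Ico.1 hj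
    simpa [hj1, hjn, hjn.ne', (show 1 ≤ j ∧ j ≤ n from ⟨hj1, hjn.le⟩)] using key j
  · simpa [hn] using key n

theorem hardyDiff_succ_eq_mul_dualHahn_of_rows {n : ℕ} {μ : ℝ} {b : ℕ → ℝ}
    (hrow : ∀ k ∈ Ico 1 n, k * (hardyDiff b k - hardyDiff b (k + 1)) = μ * b k) :
    ∀ k < n, hardyDiff b (k + 1) = b 1 * dualHahn k μ ∧
      (k + 1) * b (k + 1) = b 1 * ∑ i ∈ range (k + 1), dualHahn i μ := by
  intro k
  induction k with
  | zero => intro _; simp [hardyDiff, dualHahn_zero]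
  | succ k ih =>
    intro hk
    obtain ⟨hdiff, hsum⟩ := ih (by omega)
    have hrow' := hrow (k + 1) (mem_Ico.2 ⟨by omega, hk⟩)
    have hrec := mul_sum_range_dualHahn μ k
    push_cast at hrow' ⊢
    have hdiff' : hardyDiff b (k + 2) = b 1 * dualHahn (k + 1) μ := by
      have hk0 : ((k : ℝ) + 1) ^ 2 ≠ 0 := by positivity
      apply mul_left_cancel₀ hk0
      linear_combination -(↑k + 1) * hrow' + (↑k + 1) ^ 2 * hdiff - μ * hsum - b 1 * hrec
    refine ⟨hdiff', ?_⟩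
    rw [sum_range_succ]
    have := hardyDiff_succ b (k + 1)
    push_cast at this
    linear_combination hsum - this + hdiff'

theorem IsHardyEigenvector.dualHahn_eq_zero {n : ℕ} (hn : 1 ≤ n) {μ : ℝ} {b : ℕ → ℝ}
    (hb : IsHardyEigenvector n μ b) (hT : hardyForm n b ≠ 0) : dualHahn n μ = 0 := by
  have hprop := hardyDiff_succ_eq_mul_dualHahn_of_rows hb.1
  have hb1 : b 1 ≠ 0 := by
    intro h
    refine hT (sum_eq_zero fun k hk => ?_)
    obtain ⟨j, rfl⟩ := Nat.exists_eq_add_of_le' (mem_Icc.1 hk).1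
    rw [(hprop j (mem_Icc.1 hk).2).1, h, zero_mul, sq, zero_mul]
  obtain ⟨N, rfl⟩ := Nat.exists_eq_add_of_le' hn
  obtain ⟨hdiff, hsum⟩ := hprop N (by omega)
  have hlast := hb.2
  have hrec := mul_sum_range_dualHahn μ N
  push_cast at hlast hsum
  rw [hdiff] at hlast
  have : b 1 * ((N + 1 : ℝ) ^ 2 * dualHahn (N + 1) μ) = 0 := by
    linear_combination (↑N + 1) * hlast + μ * hsum + b 1 * hrec
  simpa [hb1, Nat.cast_add_one_ne_zero] using this

noncomputable def dualHahnMean (μ : ℝ) (k : ℕ) : ℝ := (∑ i ∈ range k, dualHahn i μ) / k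

theorem natCast_mul_dualHahnMean (μ : ℝ) (k : ℕ) :
    k * dualHahnMean μ k = ∑ i ∈ range k, dualHahn i μ := by
  rcases k with _ | k
  · simp [dualHahnMean]
  · rw [dualHahnMean]; field_simp

theorem hardyDiff_dualHahnMean (μ : ℝ) (k : ℕ) :
    hardyDiff (dualHahnMean μ) (k + 1) = dualHahn k μ := by
  rw [hardyDiff_succ, ← Nat.cast_add_one, natCast_mul_dualHahnMean, natCast_mul_dualHahnMean,
    sum_range_succ]
  ring

theorem dualHahnMean_row (μ : ℝ) (k : ℕ) :
    (k + 1 : ℕ) * (hardyDiff (dualHahnMean μ) (k + 1) - hardyDiff (dualHahnMean μ) (k + 1 + 1))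
      = μ * dualHahnMean μ (k + 1) := by
  rw [hardyDiff_dualHahnMean, hardyDiff_dualHahnMean, dualHahnMean, mul_div_assoc',
    mul_sum_range_dualHahn]
  push_cast
  field_simp

theorem dualHahnMean_last (μ : ℝ) (N : ℕ) :
    (N + 1 : ℕ) * hardyDiff (dualHahnMean μ) (N + 1)
      = μ * dualHahnMean μ (N + 1) + (N + 1 : ℕ) * dualHahn (N + 1) μ := by
  rw [hardyDiff_dualHahnMean, dualHahnMean, mul_div_assoc', mul_sum_range_dualHahn]
  push_cast
  field_simp
  ring

theorem isHardyEigenvector_dualHahnMean {n : ℕ} (hn : 1 ≤ n) {μ : ℝ} (h : dualHahn n μ = 0) :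
    IsHardyEigenvector n μ (dualHahnMean μ) := by
  refine ⟨fun k hk => ?_, ?_⟩
  · obtain ⟨j, rfl⟩ := Nat.exists_eq_add_of_le' (mem_Ico.1 hk).1
    exact dualHahnMean_row μ j
  · obtain ⟨N, rfl⟩ := Nat.exists_eq_add_of_le' hn
    simpa [h] using dualHahnMean_last μ N

theorem sqSum_dualHahnMean_pos {n : ℕ} (hn : 1 ≤ n) (μ : ℝ) :
    0 < sqSum n (dualHahnMean μ) := by
  have h1 : dualHahnMean μ 1 = 1 := by simp [dualHahnMean, dualHahn_zero]
  have := single_le_sum (fun k _ => sq_nonneg (dualHahnMean μ k)) (mem_Icc.2 ⟨le_rfl, hn⟩)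
  rw [h1, one_pow] at this
  exact one_pos.trans_le this

-- At `μ = 1/4` the contiguous relation reads `s_{j+1} = s_j - E_j / (4(j+1)²)` for the partial sums
-- `E_j`, and `E_j ≤ 2(j+1) s_{j+1}` survives this step with a margin of `s_{j+1}`.
theorem sum_range_dualHahn_quarter_pos_and_le (j : ℕ) :
    0 < ∑ i ∈ range (j + 1), dualHahn i (1 / 4) ∧
      ∑ i ∈ range (j + 1), dualHahn i (1 / 4) ≤ 2 * (j + 1) * dualHahn (j + 1) (1 / 4) := by
  induction j with
  | zero =>
    have := mul_sum_range_dualHahn (1 / 4) 0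
    simp only [zero_add, sum_range_one, dualHahn_zero] at this ⊢
    norm_num at this ⊢
    linarith
  | succ j ih =>
    obtain ⟨hpos, hle⟩ := ih
    have hrec := mul_sum_range_dualHahn (1 / 4) (j + 1)
    rw [sum_range_succ] at hrec ⊢
    push_cast at hrec ⊢
    have hj : (0 : ℝ) ≤ j := j.cast_nonneg
    have hs : 0 < dualHahn (j + 1) (1 / 4) := by nlinarith
    refine ⟨by linarith, ?_⟩
    nlinarith [mul_le_mul_of_nonneg_left hle (by positivity : (0 : ℝ) ≤ 2 * j + 5)]

theorem dualHahn_quarter_pos {n : ℕ} (hn : 1 ≤ n) : 0 < dualHahn n (1 / 4) := by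
  obtain ⟨N, rfl⟩ := Nat.exists_eq_add_of_le' hn
  obtain ⟨hpos, hle⟩ := sum_range_dualHahn_quarter_pos_and_le N
  have : (0 : ℝ) < 2 * (N + 1) := by positivity
  nlinarith

theorem dualHahnMean_quarter_pos {k : ℕ} (hk : 1 ≤ k) : 0 < dualHahnMean (1 / 4) k := by
  obtain ⟨j, rfl⟩ := Nat.exists_eq_add_of_le' hk
  exact div_pos (sum_range_dualHahn_quarter_pos_and_le j).1 (by positivity)

theorem quarter_mul_sqSum_le_hardyForm {n : ℕ} (hn : 1 ≤ n) (b : ℕ → ℝ) :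
    1 / 4 * sqSum n b ≤ hardyForm n b := by
  refine mul_sqSum_le_hardyForm_of_supersolution hn (fun k hk => dualHahnMean_quarter_pos
    (mem_Icc.1 hk).1) (fun k hk => ?_) ?_ b
  · obtain ⟨j, rfl⟩ := Nat.exists_eq_add_of_le' (mem_Ico.1 hk).1
    exact (dualHahnMean_row _ j).ge
  · obtain ⟨N, rfl⟩ := Nat.exists_eq_add_of_le' hn
    rw [dualHahnMean_last]
    have := dualHahn_quarter_pos (by omega : 1 ≤ N + 1)
    have : (0 : ℝ) ≤ (N + 1 : ℕ) * dualHahn (N + 1) (1 / 4) := by positivity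
    linarith

theorem exists_sqSum_eq_one_forall_le {n : ℕ} (hn : 1 ≤ n) :
    ∃ b : ℕ → ℝ, sqSum n b = 1 ∧ ∀ c, hardyForm n b * sqSum n c ≤ hardyForm n c := by
  set K := (Set.univ.pi fun _ => Set.Icc (-1 : ℝ) 1) ∩ {b | sqSum n b = 1}
  have hS : Continuous (sqSum n) := by unfold sqSum; fun_prop
  have hT : Continuous (hardyForm n) := by unfold hardyForm hardyDiff; fun_prop
  have hK : IsCompact K :=
    (isCompact_univ_pi fun _ => isCompact_Icc).inter_right (isClosed_eq hS continuous_const)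
  have hsingle : Pi.single 1 (1 : ℝ) ∈ K := by
    refine ⟨fun k _ => ?_, ?_⟩
    · by_cases hk : k = 1 <;> simp [hk]
    · simp [sqSum, Pi.single_apply, hn]
  obtain ⟨b, ⟨-, hb⟩, hbmin⟩ := hK.exists_isMinOn ⟨_, hsingle⟩ hT.continuousOn
  refine ⟨b, hb, fun c => ?_⟩
  rcases (sqSum_nonneg n c).eq_or_lt with hc | hc
  · rw [← hc, mul_zero]; exact hardyForm_nonneg n c
  set c' : ℕ → ℝ := (√(sqSum n c))⁻¹ • fun k => if k ∈ Icc 1 n then c k else 0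
  have hc'T : hardyForm n c' = (√(sqSum n c))⁻¹ ^ 2 * hardyForm n c := by
    rw [hardyForm_smul, hardyForm_congr fun k hk => if_pos hk]
  have hc'S : sqSum n c' = 1 := by
    rw [sqSum_smul, show sqSum n (fun k => if k ∈ Icc 1 n then c k else 0) = sqSum n c from
      sum_congr rfl fun k hk => by simp only [if_pos hk], inv_pow, sq_sqrt hc.le,
      inv_mul_cancel₀ hc.ne']
  have hc'K : c' ∈ K := by
    refine ⟨fun k _ => ?_, hc'S⟩
    by_cases hk : k ∈ Icc 1 n
    · have := single_le_sum (fun k _ => sq_nonneg (c' k)) hk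
      rw [← sqSum, hc'S] at this
      exact abs_le.1 (abs_le_one_iff_mul_self_le_one.2 (by nlinarith))
    · simp only [c', Pi.smul_apply, if_neg hk, smul_zero]
      norm_num
  have : hardyForm n b ≤ hardyForm n c' := hbmin hc'K
  rwa [hc'T, inv_pow, sq_sqrt hc.le, ← div_eq_inv_mul, le_div_iff₀ hc] at this

theorem exists_hardyEigenvalue {n : ℕ} (hn : 1 ≤ n) :
    ∃ μ : ℝ, 1 / 4 < μ ∧ dualHahn n μ = 0 ∧ ∀ c, μ * sqSum n c ≤ hardyForm n c := by
  obtain ⟨b, hb, hmin⟩ := exists_sqSum_eq_one_forall_le hn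
  have hquarter : 1 / 4 ≤ hardyForm n b := by
    simpa [hb] using quarter_mul_sqSum_le_hardyForm hn b
  have heig := isHardyEigenvector_of_isMin hn hmin (by rw [hb, mul_one])
  have hroot := heig.dualHahn_eq_zero hn (by linarith)
  refine ⟨hardyForm n b, hquarter.lt_of_ne fun h => ?_, hroot, hmin⟩
  rw [← h] at hroot
  exact (dualHahn_quarter_pos hn).ne' hroot

theorem isLeast_hardyConstant {n : ℕ} {μ : ℝ} (hμ : 0 < μ)
    (hlow : ∀ b, μ * sqSum n b ≤ hardyForm n b) {b : ℕ → ℝ} (hb : 0 < sqSum n b)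
    (hbT : hardyForm n b = μ * sqSum n b) :
    IsLeast {c : ℝ | ∀ a : ℕ → ℝ,
      ∑ k ∈ Icc 1 n, ((1 / (k : ℝ)) * ∑ j ∈ Icc 1 k, a j) ^ 2 ≤ c * ∑ k ∈ Icc 1 n, (a k) ^ 2}
      (1 / μ) := by
  refine ⟨fun a => ?_, fun c hc => ?_⟩
  · have h := hlow fun k => 1 / (k : ℝ) * ∑ j ∈ Icc 1 k, a j
    rw [hardyForm, sum_congr rfl fun k hk => by rw [hardyDiff_cesaro a (mem_Icc.1 hk).1]] at h
    rw [one_div_mul_eq_div, le_div_iff₀' hμ]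
    exact h
  · have h := hc (hardyDiff b)
    rw [sum_congr rfl fun k hk => by rw [cesaro_hardyDiff b (mem_Icc.1 hk).1]] at h
    change sqSum n b ≤ c * hardyForm n b at h
    rw [hbT, ← mul_assoc] at h
    rw [one_div, inv_le_iff_one_le_mul₀' hμ]
    nlinarith

theorem discrete_hardy_eq_dual_hahn_zero (n : ℕ) (hn : 1 ≤ n) (x₁ : ℝ)
    (hx₁ : IsLeast {x : ℝ | 0 < x ∧ contDualHahnHalf n x = 0} x₁)
    (d : ℝ)
    (hd : IsLeast {c : ℝ | ∀ a : ℕ → ℝ,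
      ∑ k ∈ Finset.Icc 1 n, ((1 / (k : ℝ)) * ∑ j ∈ Finset.Icc 1 k, a j) ^ 2
        ≤ c * ∑ k ∈ Finset.Icc 1 n, (a k) ^ 2} d) :
    d = 4 * (1 - 4 * x₁ ^ 2 / (1 + 4 * x₁ ^ 2)) ∧ d = 4 / (1 + 4 * x₁ ^ 2) := by
  obtain ⟨⟨hx₁pos, hx₁root⟩, hx₁min⟩ := hx₁
  have hroot : ∀ x, contDualHahnHalf n x = 0 ↔ dualHahn n (1 / 4 + x ^ 2) = 0 := fun x => by
    rw [contDualHahnHalf_eq, mul_eq_zero, or_iff_right (by positivity)]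
  obtain ⟨μ, hμ, hμroot, hμlow⟩ := exists_hardyEigenvalue hn
  have hx₁μ : x₁ ≤ √(μ - 1 / 4) := hx₁min
    ⟨Real.sqrt_pos.2 (by linarith), (hroot _).2 (by rwa [sq_sqrt (by linarith), add_sub_cancel])⟩
  have hmμ : 1 / 4 + x₁ ^ 2 ≤ μ := by
    nlinarith [sq_sqrt (by linarith : (0 : ℝ) ≤ μ - 1 / 4)]
  have heig := isHardyEigenvector_dualHahnMean hn ((hroot x₁).1 hx₁root)
  have hm : IsLeast _ (1 / (1 / 4 + x₁ ^ 2)) := isLeast_hardyConstant (by positivity)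
    (fun c => (mul_le_mul_of_nonneg_right hmμ (sqSum_nonneg n c)).trans (hμlow c))
    (sqSum_dualHahnMean_pos hn _) (heig.hardyForm_eq hn)
  rw [hd.unique hm]
  constructor
  · field_simp; ring
  · field_simp
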